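/- arXiv:1803.10928 — 2 statements merged into one kernel-verified Lean document; each statement's English description precedes it below -/
import Mathlib

section
/- Let u = x − y and v = ∇f(x) − ∇f(y) for a function f with m-strongly monotone and L-Lipschitz gradient (0 < m ≤ L). Then the quadratic form [u; v]ᵀ Q [u; v] ≥ 0 holds, where Q = [[−2mL, m+L],[m+L, −2]] ⊗ I_d. -/
open RealInnerProductSpace Set

/-! Subtracting `m / 2 * ‖x‖ ^ 2` from `f` leaves a convex function whose gradient
`G = g - m • id` satisfies `⟪x - y, G x - G y⟫ ≤ (L - m) * ‖x - y‖ ^ 2`. For such a function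
the first-order lower bound at one point, compared with the descent-lemma upper bound at the
gradient step from another, yields co-coercivity
`‖G x - G y‖ ^ 2 ≤ (L - m) * ⟪x - y, G x - G y⟫`, and expanding `G` gives the claim.
The gradient structure is essential: a rotation added to `m • id` is strongly monotone and
Lipschitz but violates the inequality. When `m = L`, Cauchy–Schwarz forces
`⟪x - y, g x - g y⟫ = m * ‖x - y‖ ^ 2` and the claim is immediate. -/

theorem add_add_half_le_of_mul_le_deriv_sub {φ φ' : ℝ → ℝ} (hφ : ∀ t, HasDerivAt φ (φ' t) t)
    {c : ℝ} (hc : ∀ t ∈ Ioo (0 : ℝ) 1, c * t ≤ φ' t - φ' 0) : φ 0 + φ' 0 + c / 2 ≤ φ 1 := by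
  set ψ : ℝ → ℝ := fun t => φ t - t * φ' 0 - c / 2 * t ^ 2
  have hψ : ∀ t, HasDerivAt ψ (φ' t - φ' 0 - c * t) t := fun t =>
    (((hφ t).sub ((hasDerivAt_id t).mul_const (φ' 0))).sub
      ((hasDerivAt_pow 2 t).const_mul (c / 2))).congr_deriv
        (by simp only [one_mul, Nat.cast_ofNat, Nat.add_one_sub_one, pow_one]; ring)
  have hmono : MonotoneOn ψ (Icc 0 1) :=
    monotoneOn_of_hasDerivWithinAt_nonneg (convex_Icc 0 1)
      (fun t _ => (hψ t).continuousAt.continuousWithinAt) (fun t _ => (hψ t).hasDerivWithinAt)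
      (fun t ht => by rw [interior_Icc] at ht; linarith [hc t ht])
  have h01 := hmono (left_mem_Icc.2 zero_le_one) (right_mem_Icc.2 zero_le_one) zero_le_one
  simp only [ψ] at h01
  linarith

section

variable {E : Type*} [NormedAddCommGroup E] [InnerProductSpace ℝ E] [CompleteSpace E]

theorem HasGradientAt.sub {f₁ f₂ : E → ℝ} {g₁ g₂ x : E} (h₁ : HasGradientAt f₁ g₁ x)
    (h₂ : HasGradientAt f₂ g₂ x) : HasGradientAt (fun y => f₁ y - f₂ y) (g₁ - g₂) x := by
  rw [hasGradientAt_iff_hasFDerivAt, map_sub]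
  exact h₁.hasFDerivAt.sub h₂.hasFDerivAt

theorem HasGradientAt.neg {f : E → ℝ} {g x : E} (h : HasGradientAt f g x) :
    HasGradientAt (fun y => -f y) (-g) x := by
  rw [hasGradientAt_iff_hasFDerivAt, map_neg]
  exact h.hasFDerivAt.neg

theorem hasGradientAt_half_mul_norm_sq (c : ℝ) (x : E) :
    HasGradientAt (fun y => c / 2 * ‖y‖ ^ 2) (c • x) x := by
  rw [hasGradientAt_iff_hasFDerivAt]
  refine ((hasStrictFDerivAt_norm_sq x).hasFDerivAt.const_mul (c / 2)).congr_fderiv ?_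
  ext y
  simp only [smul_apply, coe_innerSL_apply, nsmul_eq_mul, smul_eq_mul,
    map_smul, InnerProductSpace.toDual_apply_apply]
  ring

theorem HasGradientAt.comp_add_smul {f : E → ℝ} {g a v : E} {t : ℝ}
    (h : HasGradientAt f g (a + t • v)) :
    HasDerivAt (fun s : ℝ => f (a + s • v)) ⟪g, v⟫ t := by
  have hline : HasDerivAt (fun s : ℝ => a + s • v) v t := by
    simpa using ((hasDerivAt_id t).smul_const v).const_add a
  simpa [InnerProductSpace.toDual_apply_apply, Function.comp_def] using
    h.hasFDerivAt.comp_hasDerivAt t hline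

variable {f : E → ℝ} {G : E → E}

theorem add_inner_add_half_mul_norm_sq_le (hf : ∀ x, HasGradientAt f (G x) x) {c : ℝ}
    (hc : ∀ x y, c * ‖x - y‖ ^ 2 ≤ ⟪x - y, G x - G y⟫) (a b : E) :
    f a + ⟪G a, b - a⟫ + c / 2 * ‖b - a‖ ^ 2 ≤ f b := by
  have key := add_add_half_le_of_mul_le_deriv_sub (c := c * ‖b - a‖ ^ 2)
    (fun t => (hf (a + t • (b - a))).comp_add_smul) fun t ht => by
      have h := hc (a + t • (b - a)) a
      rw [add_sub_cancel_left, norm_smul, real_inner_smul_left, Real.norm_eq_abs,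
        abs_of_pos ht.1, real_inner_comm, inner_sub_left,
        show c * (t * ‖b - a‖) ^ 2 = t * (c * ‖b - a‖ ^ 2 * t) by ring] at h
      simpa using le_of_mul_le_mul_left h ht.1
  simp only [zero_smul, add_zero, one_smul, add_sub_cancel] at key
  linarith

theorem le_add_inner_add_half_mul_norm_sq (hf : ∀ x, HasGradientAt f (G x) x) {K : ℝ}
    (hK : ∀ x y, ⟪x - y, G x - G y⟫ ≤ K * ‖x - y‖ ^ 2) (a b : E) :
    f b ≤ f a + ⟪G a, b - a⟫ + K / 2 * ‖b - a‖ ^ 2 := by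
  have h := add_inner_add_half_mul_norm_sq_le (G := fun x => -G x) (c := -K)
    (fun x => (hf x).neg) (fun x y => by
      rw [neg_sub_neg, ← neg_sub (G x), inner_neg_right]; linarith [hK x y]) a b
  simp only [inner_neg_left] at h
  linarith

theorem add_inner_add_inv_mul_norm_sq_le (hf : ∀ x, HasGradientAt f (G x) x)
    (hmono : ∀ x y, 0 ≤ ⟪x - y, G x - G y⟫) {K : ℝ} (hK₀ : 0 < K)
    (hK : ∀ x y, ⟪x - y, G x - G y⟫ ≤ K * ‖x - y‖ ^ 2) (p q : E) :
    f p + ⟪G p, q - p⟫ + (2 * K)⁻¹ * ‖G q - G p‖ ^ 2 ≤ f q := by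
  -- the gradient step of length `K⁻¹` from `q`, where the descent bound is sharpest
  set b := q - K⁻¹ • (G q - G p)
  have hlow : f p + ⟪G p, b - p⟫ ≤ f b := by
    simpa using add_inner_add_half_mul_norm_sq_le hf (c := 0) (by simpa using hmono) p b
  have hup := le_add_inner_add_half_mul_norm_sq hf hK q b
  have hbp : b - p = (q - p) - K⁻¹ • (G q - G p) := by simp only [b]; abel
  have hbq : b - q = -(K⁻¹ • (G q - G p)) := by simp only [b]; abel
  rw [hbp, inner_sub_right, real_inner_smul_right] at hlow
  rw [hbq, inner_neg_right, real_inner_smul_right, norm_neg, norm_smul, Real.norm_eq_abs,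
    abs_of_pos (inv_pos.2 hK₀), mul_pow] at hup
  have hgap : K⁻¹ * ⟪G q, G q - G p⟫ - K⁻¹ * ⟪G p, G q - G p⟫ = K⁻¹ * ‖G q - G p‖ ^ 2 := by
    rw [← mul_sub, ← inner_sub_left, real_inner_self_eq_norm_sq]
  have hK2 : K / 2 * (K⁻¹ ^ 2 * ‖G q - G p‖ ^ 2)
      = K⁻¹ * ‖G q - G p‖ ^ 2 - (2 * K)⁻¹ * ‖G q - G p‖ ^ 2 := by
    field_simp; ring
  linarith

theorem norm_sub_sq_le_mul_inner_sub (hf : ∀ x, HasGradientAt f (G x) x)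
    (hmono : ∀ x y, 0 ≤ ⟪x - y, G x - G y⟫) {K : ℝ} (hK₀ : 0 < K)
    (hK : ∀ x y, ⟪x - y, G x - G y⟫ ≤ K * ‖x - y‖ ^ 2) (x y : E) :
    ‖G x - G y‖ ^ 2 ≤ K * ⟪x - y, G x - G y⟫ := by
  have hxy := add_inner_add_inv_mul_norm_sq_le hf hmono hK₀ hK x y
  have hyx := add_inner_add_inv_mul_norm_sq_le hf hmono hK₀ hK y x
  rw [norm_sub_rev] at hxy
  have hsum : ⟪G x, y - x⟫ + ⟪G y, x - y⟫ = -⟪x - y, G x - G y⟫ := by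
    simp only [inner_sub_left, inner_sub_right, real_inner_comm]; ring
  have : K⁻¹ * ‖G x - G y‖ ^ 2 ≤ ⟪x - y, G x - G y⟫ := by
    rw [show K⁻¹ = 2 * (2 * K)⁻¹ by field_simp]; linarith
  calc ‖G x - G y‖ ^ 2 = K * (K⁻¹ * ‖G x - G y‖ ^ 2) := by field_simp
    _ ≤ K * ⟪x - y, G x - G y⟫ := mul_le_mul_of_nonneg_left this hK₀.le

theorem mul_mul_norm_sq_add_norm_sq_le_inner_sub (hf : ∀ x, HasGradientAt f (G x) x)
    {c K : ℝ} (hcK : c < K) (hc : ∀ x y, c * ‖x - y‖ ^ 2 ≤ ⟪x - y, G x - G y⟫)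
    (hK : ∀ x y, ⟪x - y, G x - G y⟫ ≤ K * ‖x - y‖ ^ 2) (x y : E) :
    c * K * ‖x - y‖ ^ 2 + ‖G x - G y‖ ^ 2 ≤ (c + K) * ⟪x - y, G x - G y⟫ := by
  have hdiff : ∀ x y : E, (G x - c • x) - (G y - c • y) = (G x - G y) - c • (x - y) := by
    intro x y; rw [smul_sub]; abel
  have hinner : ∀ x y : E, ⟪x - y, (G x - c • x) - (G y - c • y)⟫
      = ⟪x - y, G x - G y⟫ - c * ‖x - y‖ ^ 2 := by
    intro x y
    rw [hdiff, inner_sub_right, real_inner_smul_right, real_inner_self_eq_norm_sq]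
  have h := norm_sub_sq_le_mul_inner_sub (G := fun x => G x - c • x)
    (fun x => (hf x).sub (hasGradientAt_half_mul_norm_sq c x))
    (fun x y => by rw [hinner]; linarith [hc x y]) (sub_pos.2 hcK)
    (fun x y => by rw [hinner]; linarith [hK x y]) x y
  rw [hinner, hdiff, norm_sub_sq_real, real_inner_smul_right, norm_smul, Real.norm_eq_abs,
    mul_pow, sq_abs, real_inner_comm] at h
  linarith

theorem mul_mul_norm_sq_add_norm_sq_le_inner_sub_of_lipschitz
    (hf : ∀ x, HasGradientAt f (G x) x) {c K : ℝ} (hcK : c ≤ K)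
    (hc : ∀ x y, c * ‖x - y‖ ^ 2 ≤ ⟪x - y, G x - G y⟫)
    (hK : ∀ x y, ‖G x - G y‖ ≤ K * ‖x - y‖) (x y : E) :
    c * K * ‖x - y‖ ^ 2 + ‖G x - G y‖ ^ 2 ≤ (c + K) * ⟪x - y, G x - G y⟫ := by
  have hCS : ∀ x y, ⟪x - y, G x - G y⟫ ≤ K * ‖x - y‖ ^ 2 := fun x y =>
    calc ⟪x - y, G x - G y⟫ ≤ ‖x - y‖ * ‖G x - G y‖ := real_inner_le_norm _ _
      _ ≤ ‖x - y‖ * (K * ‖x - y‖) := mul_le_mul_of_nonneg_left (hK x y) (norm_nonneg _)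
      _ = K * ‖x - y‖ ^ 2 := by ring
  rcases hcK.lt_or_eq with hlt | rfl
  · exact mul_mul_norm_sq_add_norm_sq_le_inner_sub hf hlt hc hCS x y
  · have hinner : ⟪x - y, G x - G y⟫ = c * ‖x - y‖ ^ 2 := (hCS x y).antisymm (hc x y)
    have hnorm : ‖G x - G y‖ ^ 2 ≤ (c * ‖x - y‖) ^ 2 :=
      pow_le_pow_left₀ (norm_nonneg _) (hK x y) 2
    rw [hinner]
    nlinarith

end

theorem quadratic_form_Qf_nonneg_general (d : ℕ) (f : EuclideanSpace ℝ (Fin d) → ℝ)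
    (g : EuclideanSpace ℝ (Fin d) → EuclideanSpace ℝ (Fin d)) (m L : ℝ)
    (hmL : m ≤ L)
    (hgrad : ∀ x, HasGradientAt f (g x) x)
    (hmono : ∀ x y, m * ‖x - y‖ ^ 2 ≤ ⟪x - y, g x - g y⟫)
    (hlip : ∀ x y, ‖g x - g y‖ ≤ L * ‖x - y‖) :
    ∀ x y, 0 ≤ -2 * m * L * ‖x - y‖ ^ 2 + 2 * (m + L) * ⟪x - y, g x - g y⟫
      - 2 * ‖g x - g y‖ ^ 2 := by
  intro x y
  linarith [mul_mul_norm_sq_add_norm_sq_le_inner_sub_of_lipschitz hgrad hmL hmono hlip x y]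

theorem quadratic_form_Qf_nonneg (d : ℕ) (f : EuclideanSpace ℝ (Fin d) → ℝ)
    (g : EuclideanSpace ℝ (Fin d) → EuclideanSpace ℝ (Fin d)) (m L : ℝ)
    (hm : 0 < m) (hmL : m ≤ L)
    (hgrad : ∀ x, HasGradientAt f (g x) x)
    (hmono : ∀ x y, m * ‖x - y‖ ^ 2 ≤ ⟪x - y, g x - g y⟫)
    (hlip : ∀ x y, ‖g x - g y‖ ≤ L * ‖x - y‖) :
    ∀ x y, 0 ≤ -2 * m * L * ‖x - y‖ ^ 2 + 2 * (m + L) * ⟪x - y, g x - g y⟫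
      - 2 * ‖g x - g y‖ ^ 2 :=
  quadratic_form_Qf_nonneg_general d f g m L hmL hgrad hmono hlip
end

section
/- For the gradient method (x_{k+1} = x_k − h∇f(x_k)) with the Lyapunov candidate V(x) = f(x) − f(x⋆) + p‖x − x⋆‖², if there exist p ≥ 0, λ ≥ 0, ρ ∈ [0,1] such that the 2×2 matrix M with entries M₁₁ = (p − m/2)(1−ρ²) − 2mLλ, M₁₂ = M₂₁ = −hp − ρ²/2 + 1/2 + λ(m+L), M₂₂ = h²p + (1/2)(Lh² − 2h) − 2λ is negative semidefinite, then V(x_{k+1}) ≤ ρ² V(x_k) for all k and all f that are m-strongly convex with L-Lipschitz gradient. -/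
open RealInnerProductSpace

lemma gd_key_interp {E : Type*} [NormedAddCommGroup E] [InnerProductSpace ℝ E]
    (m L : ℝ) (hm : 0 < m) (hmL : m ≤ L)
    (f : E → ℝ) (g : E → E) (xstar : E)
    (hsc : ∀ x y, f x + ⟪g x, y - x⟫ + (m / 2) * ‖y - x‖ ^ 2 ≤ f y)
    (hsm : ∀ x y, f y ≤ f x + ⟪g x, y - x⟫ + (L / 2) * ‖y - x‖ ^ 2)
    (hg0 : g xstar = 0) (y : E) :
    m * L * ‖y - xstar‖^2 + ‖g y‖^2 ≤ (m + L) * ⟪y - xstar, g y⟫ := by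
  set u : E := y - xstar with hu
  set v : E := g y with hv
  set w : E := v - m • u with hwdef
  have hsm2 : ∀ (t : ℝ) (b : E), ‖t • b‖^2 = t^2 * ‖b‖^2 := by
    intro t b
    rw [norm_smul]
    simp [mul_pow, sq_abs, Real.norm_eq_abs]
  have nexp : ∀ (t : ℝ) (a b : E), ‖a - t • b‖^2 = ‖a‖^2 - 2*t*⟪a,b⟫ + t^2*‖b‖^2 := by
    intro t a b
    rw [norm_sub_sq_real, real_inner_smul_right, hsm2]
    ring
  have hv' : v = w + m • u := by rw [hwdef]; abel
  have hA : ⟪u,u⟫ = ‖u‖^2 := real_inner_self_eq_norm_sq u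
  have hW : ⟪w,w⟫ = ‖w‖^2 := real_inner_self_eq_norm_sq w
  have hc : ⟪w,u⟫ = ⟪u,w⟫ := real_inner_comm u w
  have hW2 : ‖w‖^2 = ‖v‖^2 - 2*m*⟪u,v⟫ + m^2*‖u‖^2 := by
    rw [hwdef, nexp, real_inner_comm]
  have hP2 : ⟪u,w⟫ = ⟪u,v⟫ - m*‖u‖^2 := by
    rw [hwdef, inner_sub_right, real_inner_smul_right, hA]
  have ht : ∀ t : ℝ, 2*t*‖w‖^2 - (L-m)*t^2*‖w‖^2 ≤ ⟪u,w⟫ := by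
    intro t
    have i1 := hsc y (xstar + t • w)
    have i2 := hsm xstar (xstar + t • w)
    have i3 := hsc xstar (y - t • w)
    have i4 := hsm y (y - t • w)
    rw [hg0] at i2 i3
    have e1 : xstar + t • w - y = -(u - t • w) := by rw [hu]; abel
    have e2 : xstar + t • w - xstar = t • w := by abel
    have e3 : y - t • w - xstar = u - t • w := by rw [hu]; abel
    have e4 : y - t • w - y = -(t • w) := by abel
    rw [e1] at i1
    rw [e2] at i2
    rw [e3] at i3
    rw [e4] at i4
    rw [← hv, hv'] at i1 i4
    rw [norm_neg, nexp] at i1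
    rw [hsm2] at i2
    rw [nexp] at i3
    rw [norm_neg, hsm2] at i4
    simp only [inner_neg_right, inner_sub_right, inner_add_left, real_inner_smul_left,
      real_inner_smul_right, inner_zero_left] at i1 i2 i3 i4
    simp only [hA, hW, hc] at i1 i4
    linarith [i1, i2, i3, i4]
  have hWP : ‖w‖^2 ≤ (L - m) * ⟪u,w⟫ := by
    rcases eq_or_lt_of_le hmL with heq | hlt
    · subst heq
      have hW0 : ‖w‖^2 ≤ 0 := by
        by_contra hcon
        push_neg at hcon
        have := ht ((⟪u,w⟫ / ‖w‖^2 + 1) / 2)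
        have h2 : (2 * ((⟪u,w⟫ / ‖w‖^2 + 1) / 2)) * ‖w‖^2 = ⟪u,w⟫ + ‖w‖^2 := by
          field_simp
          rw [mul_add, mul_one, mul_div_assoc', mul_comm (‖w‖^2), mul_div_assoc, div_self hcon.ne', mul_one]
        nlinarith [this]
      nlinarith [sq_nonneg ‖w‖]
    · have hs : 0 < L - m := by linarith
      have hti := ht (1 / (L - m))
      have h2 : 2*(1/(L-m))*‖w‖^2 - (L-m)*(1/(L-m))^2*‖w‖^2 = ‖w‖^2 / (L-m) := by
        field_simp
        ring
      rw [h2] at hti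
      calc ‖w‖^2 = (L-m) * (‖w‖^2 / (L-m)) := by field_simp
        _ ≤ (L-m) * ⟪u,w⟫ := by apply mul_le_mul_of_nonneg_left hti (le_of_lt hs)
  nlinarith [hWP, hW2, hP2]


theorem gradient_method_lyapunov_decrease (d : ℕ) (m L h p lam ρ : ℝ)
    (hm : 0 < m) (hmL : m ≤ L) (hh : 0 ≤ h) (hp : 0 ≤ p) (hlam : 0 ≤ lam)
    (hρ0 : 0 ≤ ρ) (hρ1 : ρ ≤ 1)
    (hNSD : ∀ a b : ℝ,
      ((p - m / 2) * (1 - ρ ^ 2) - 2 * m * L * lam) * a ^ 2 +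
        2 * (-h * p - ρ ^ 2 / 2 + 1 / 2 + lam * (m + L)) * a * b +
        (h ^ 2 * p + (1 / 2) * (L * h ^ 2 - 2 * h) - 2 * lam) * b ^ 2 ≤ 0) :
    ∀ (f : EuclideanSpace ℝ (Fin d) → ℝ)
      (g : EuclideanSpace ℝ (Fin d) → EuclideanSpace ℝ (Fin d))
      (xstar : EuclideanSpace ℝ (Fin d)),
      (∀ x, HasGradientAt f (g x) x) →
      (∀ x y, f x + ⟪g x, y - x⟫ + (m / 2) * ‖y - x‖ ^ 2 ≤ f y) →
      (∀ x y, f y ≤ f x + ⟪g x, y - x⟫ + (L / 2) * ‖y - x‖ ^ 2) →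
      g xstar = 0 →
      ∀ (x : ℕ → EuclideanSpace ℝ (Fin d)),
        (∀ k, x (k + 1) = x k - h • g (x k)) →
        ∀ k, f (x (k + 1)) - f xstar + p * ‖x (k + 1) - xstar‖ ^ 2 ≤
          ρ ^ 2 * (f (x k) - f xstar + p * ‖x k - xstar‖ ^ 2) := by
  intro f g xstar hgrad hsc hsm hg0 x hx k
  set u : EuclideanSpace ℝ (Fin d) := x k - xstar with hu
  set v : EuclideanSpace ℝ (Fin d) := g (x k) with hv
  -- key interpolation inequality
  have key := gd_key_interp m L hm hmL f g xstar hsc hsm hg0 (x k)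
  rw [← hu, ← hv] at key
  -- algebra helpers
  have hsm2 : ∀ (t : ℝ) (b : EuclideanSpace ℝ (Fin d)), ‖t • b‖^2 = t^2 * ‖b‖^2 := by
    intro t b
    rw [norm_smul]
    simp [mul_pow, sq_abs, Real.norm_eq_abs]
  have nexp : ∀ (t : ℝ) (a b : EuclideanSpace ℝ (Fin d)),
      ‖a - t • b‖^2 = ‖a‖^2 - 2*t*⟪a,b⟫ + t^2*‖b‖^2 := by
    intro t a b
    rw [norm_sub_sq_real, real_inner_smul_right, hsm2]
    ring
  -- rewrite the iterate
  have ex : x (k+1) - xstar = u - h • v := by rw [hx k, hu, hv]; abel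
  have exk : x (k+1) - x k = -(h • v) := by rw [hx k]; abel
  -- smoothness step
  have smooth := hsm (x k) (x (k+1))
  rw [exk, ← hv, inner_neg_right, real_inner_smul_right, real_inner_self_eq_norm_sq,
    norm_neg, hsm2] at smooth
  -- strong convexity step
  have sc := hsc (x k) xstar
  have ex2 : xstar - x k = -u := by rw [hu]; abel
  rw [ex2, ← hv, inner_neg_right, norm_neg] at sc
  -- NSD quadratic form bound on vectors
  have hQ : ((p - m / 2) * (1 - ρ ^ 2) - 2 * m * L * lam) * ‖u‖ ^ 2 +
      2 * (-h * p - ρ ^ 2 / 2 + 1 / 2 + lam * (m + L)) * ⟪u, v⟫ +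
      (h ^ 2 * p + (1 / 2) * (L * h ^ 2 - 2 * h) - 2 * lam) * ‖v‖ ^ 2 ≤ 0 := by
    have h1 := hNSD ‖u‖ ‖v‖
    have h2 := hNSD ‖u‖ (-‖v‖)
    have hcs1 : ⟪u, v⟫ ≤ ‖u‖ * ‖v‖ := real_inner_le_norm u v
    have hcs2 : -(‖u‖ * ‖v‖) ≤ ⟪u, v⟫ := neg_le_of_abs_le (abs_real_inner_le_norm u v)
    rcases le_total 0 (-h * p - ρ ^ 2 / 2 + 1 / 2 + lam * (m + L)) with hM | hM
    · linarith [h1, mul_le_mul_of_nonneg_left hcs1 (by linarith : (0:ℝ) ≤ 2 * (-h * p - ρ ^ 2 / 2 + 1 / 2 + lam * (m + L)))]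
    · linarith [h2, mul_le_mul_of_nonneg_left hcs2 (by linarith : (0:ℝ) ≤ -(2 * (-h * p - ρ ^ 2 / 2 + 1 / 2 + lam * (m + L))))]
  -- expand Lyapunov norm
  rw [ex, nexp]
  have hρ2 : 0 ≤ 1 - ρ ^ 2 := by nlinarith
  have t1 : (1 - ρ^2) * (f (x k) - f xstar) ≤ (1 - ρ^2) * (⟪v, u⟫ - (m/2) * ‖u‖^2) := by
    apply mul_le_mul_of_nonneg_left _ hρ2
    linarith [sc]
  have t2 : 2 * lam * (m * L * ‖u‖^2 + ‖v‖^2) ≤ 2 * lam * ((m + L) * ⟪u, v⟫) := by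
    apply mul_le_mul_of_nonneg_left key (by linarith)
  have hcomm : ⟪v, u⟫ = ⟪u, v⟫ := real_inner_comm u v
  rw [hcomm] at t1
  linarith [t1, t2, smooth, hQ]
end
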